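/- arXiv:2605.07513 — 6 statements merged into one kernel-verified Lean document; each statement's English description precedes it below -/
import Mathlib

section
/- Let a_1,...,a_n be distinct points in R^d, and for x in the closed ball of radius r around a_k (with r < (1/2) min_{l != k} ||a_k - a_l||), suppose alpha_k(t,x) in [0,1] with sum_l alpha_l(t,x) = 1. Define v_t(x) = (1/(1-t)) * sum_{l=1}^n alpha_l(t,x) (a_l - x). If ||x - a_k|| = r and M = max_l ||a_k - a_l||, then (1-t) * <a_k - x, v_t(x)> >= alpha_k(t,x) r^2 - r (M + r) (1 - alpha_k(t,x)). In particular, if alpha_k(t,x) > r(M+r)/(r^2 + r(M+r)), then <a_k - x, v_t(x)> > 0, i.e., the velocity points strictly inward on the sphere of radius r around a_k. -/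
open Real Metric Set Filter
open scoped RealInnerProductSpace Topology

theorem stmt_1 {d n : ℕ} (a : Fin n → EuclideanSpace ℝ (Fin d)) (k : Fin n)
    (r M t : ℝ) (ht : t < 1) (hrpos : 0 < r)
    (hhalf : ∀ l : Fin n, l ≠ k → r < ‖a k - a l‖ / 2)
    (hdist : ∀ k' l : Fin n, k' ≠ l → a k' ≠ a l)
    (hM : ∀ l : Fin n, ‖a k - a l‖ ≤ M)
    (x : EuclideanSpace ℝ (Fin d)) (hx : ‖x - a k‖ = r)
    (α : Fin n → ℝ) (hα0 : ∀ l, 0 ≤ α l) (hα1 : ∑ l, α l = 1)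
    (v : EuclideanSpace ℝ (Fin d))
    (hv : v = (1 / (1 - t)) • ∑ l, α l • (a l - x)) :
    α k * r ^ 2 - r * (M + r) * (1 - α k) ≤ (1 - t) * ⟪a k - x, v⟫ ∧
      (r * (M + r) / (r ^ 2 + r * (M + r)) < α k → 0 < ⟪a k - x, v⟫) := by
  have ht' : (0:ℝ) < 1 - t := by linarith
  have hM0 : 0 ≤ M := le_trans (by simp) (hM k)
  have hkx : ‖a k - x‖ = r := by rw [norm_sub_rev]; exact hx
  have key : (1 - t) * ⟪a k - x, v⟫ = ∑ l, α l * ⟪a k - x, a l - x⟫ := by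
    rw [hv, inner_smul_right, inner_sum]
    simp only [inner_smul_right]
    field_simp
  have hbound : ∀ l : Fin n, -(r * (M + r)) ≤ ⟪a k - x, a l - x⟫ := by
    intro l
    have h1 : ‖a l - x‖ ≤ M + r := by
      calc ‖a l - x‖ = ‖(a l - a k) + (a k - x)‖ := by rw [sub_add_sub_cancel]
        _ ≤ ‖a l - a k‖ + ‖a k - x‖ := norm_add_le _ _
        _ ≤ M + r := by
            rw [norm_sub_rev, hkx]
            exact add_le_add_left (hM l) r
    have h2 := abs_real_inner_le_norm (a k - x) (a l - x)
    have h3 : ‖a k - x‖ * ‖a l - x‖ ≤ r * (M + r) := by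
      rw [hkx]; exact mul_le_mul_of_nonneg_left h1 hrpos.le
    have := neg_abs_le ⟪a k - x, a l - x⟫
    nlinarith
  have hsum1 : ∑ l ∈ Finset.univ.erase k, α l = 1 - α k := by
    have := Finset.add_sum_erase Finset.univ α (Finset.mem_univ k)
    linarith [hα1 ▸ this]
  have hrest : (1 - α k) * (-(r * (M + r))) ≤
      ∑ l ∈ Finset.univ.erase k, α l * ⟪a k - x, a l - x⟫ := by
    rw [← hsum1, Finset.sum_mul]
    apply Finset.sum_le_sum
    intro l _
    exact mul_le_mul_of_nonneg_left (hbound l) (hα0 l)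
  have hself : α k * ⟪a k - x, a k - x⟫ = α k * r ^ 2 := by
    rw [real_inner_self_eq_norm_sq, hkx]
  have hsplit : ∑ l, α l * ⟪a k - x, a l - x⟫ =
      α k * ⟪a k - x, a k - x⟫ + ∑ l ∈ Finset.univ.erase k, α l * ⟪a k - x, a l - x⟫ :=
    (Finset.add_sum_erase Finset.univ _ (Finset.mem_univ k)).symm
  have main : α k * r ^ 2 - r * (M + r) * (1 - α k) ≤ (1 - t) * ⟪a k - x, v⟫ := by
    rw [key, hsplit, hself]
    nlinarith [hrest]
  refine ⟨main, fun hαk => ?_⟩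
  have hden : 0 < r ^ 2 + r * (M + r) := by positivity
  have h1 : r * (M + r) < α k * (r ^ 2 + r * (M + r)) := by
    rw [div_lt_iff₀ hden] at hαk
    linarith
  have h2 : 0 < α k * r ^ 2 - r * (M + r) * (1 - α k) := by nlinarith
  have := lt_of_lt_of_le h2 main
  nlinarith [this]
end

section
/- Let a_1,...,a_n in R^d span a linear subspace E (with a_1 = 0), and let gamma_t denote the flow map of the ODE d/dt y = v_t(y) with v_t(x) = sum_k alpha_k(t,x)(a_k - x)/(1-t). Then for every t in [0,1) and x = x_par + x_perp (orthogonal decomposition with x_par in E), one has gamma_t(x) = gamma_t(x_par) + (1-t) x_perp. In particular, the perpendicular component evolves as x_perp_t = (1-t) x_perp and converges to 0 as t -> 1. -/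
open Real Metric Set Filter
open scoped Topology

/-- Softmax posterior weights of semi-discrete Flow Matching. -/
noncomputable def fmAlpha {d n : ℕ} (a : Fin n → EuclideanSpace ℝ (Fin d))
    (t : ℝ) (x : EuclideanSpace ℝ (Fin d)) (k : Fin n) : ℝ :=
  Real.exp (-‖x - t • a k‖ ^ 2 / (2 * (1 - t) ^ 2)) /
    ∑ i, Real.exp (-‖x - t • a i‖ ^ 2 / (2 * (1 - t) ^ 2))

/-- Closed-form semi-discrete Flow Matching velocity field. -/
noncomputable def fmVel {d n : ℕ} (a : Fin n → EuclideanSpace ℝ (Fin d))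
    (t : ℝ) (x : EuclideanSpace ℝ (Fin d)) : EuclideanSpace ℝ (Fin d) :=
  (1 / (1 - t)) • ∑ k, fmAlpha a t x k • (a k - x)

namespace FMaux

variable {d n : ℕ}

lemma sum_exp_pos (hn : 0 < n) (f : Fin n → ℝ) : 0 < ∑ i, Real.exp (f i) :=
  Finset.sum_pos (fun i _ => Real.exp_pos _)
    (Finset.univ_nonempty_iff.mpr ⟨⟨0, hn⟩⟩)

lemma fmAlpha_add_perp (a : Fin n → EuclideanSpace ℝ (Fin d)) (t : ℝ)
    {y c : EuclideanSpace ℝ (Fin d)} (hy : y ∈ Submodule.span ℝ (Set.range a))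
    (hc : c ∈ (Submodule.span ℝ (Set.range a))ᗮ) (k : Fin n) :
    fmAlpha a t (y + c) k = fmAlpha a t y k := by
  have hI : ∀ j : Fin n, ‖y + c - t • a j‖ ^ 2 = ‖y - t • a j‖ ^ 2 + ‖c‖ ^ 2 := by
    intro j
    have hmem : y - t • a j ∈ Submodule.span ℝ (Set.range a) :=
      Submodule.sub_mem _ hy (Submodule.smul_mem _ _ (Submodule.subset_span ⟨j, rfl⟩))
    have h0 : inner ℝ (y - t • a j) c = (0 : ℝ) :=
      (Submodule.mem_orthogonal _ c).mp hc _ hmem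
    rw [add_sub_right_comm, norm_add_sq_real, h0]
    ring
  unfold fmAlpha
  simp only [hI]
  have hfac : ∀ A : ℝ, -(A + ‖c‖ ^ 2) / (2 * (1 - t) ^ 2)
      = -A / (2 * (1 - t) ^ 2) + -‖c‖ ^ 2 / (2 * (1 - t) ^ 2) := fun A => by ring
  simp only [hfac, Real.exp_add]
  rw [← Finset.sum_mul, mul_div_mul_right _ _ (Real.exp_ne_zero _)]

lemma sum_fmAlpha (hn : 0 < n) (a : Fin n → EuclideanSpace ℝ (Fin d)) (t : ℝ)
    (x : EuclideanSpace ℝ (Fin d)) : ∑ k, fmAlpha a t x k = 1 := by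
  unfold fmAlpha
  rw [← Finset.sum_div, div_self]
  exact ne_of_gt (sum_exp_pos hn _)

lemma fmVel_mem (a : Fin n → EuclideanSpace ℝ (Fin d)) (t : ℝ)
    {y : EuclideanSpace ℝ (Fin d)} (hy : y ∈ Submodule.span ℝ (Set.range a)) :
    fmVel a t y ∈ Submodule.span ℝ (Set.range a) := by
  unfold fmVel
  exact Submodule.smul_mem _ _ (Submodule.sum_mem _ fun k _ =>
    Submodule.smul_mem _ _ (Submodule.sub_mem _ (Submodule.subset_span ⟨k, rfl⟩) hy))

lemma fmVel_add_perp (hn : 0 < n) (a : Fin n → EuclideanSpace ℝ (Fin d)) (t : ℝ)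
    {y c : EuclideanSpace ℝ (Fin d)} (hy : y ∈ Submodule.span ℝ (Set.range a))
    (hc : c ∈ (Submodule.span ℝ (Set.range a))ᗮ) :
    fmVel a t (y + c) = fmVel a t y - (1 / (1 - t)) • c := by
  unfold fmVel
  rw [← smul_sub]
  congr 1
  have h : ∀ k : Fin n, fmAlpha a t (y + c) k • (a k - (y + c))
      = fmAlpha a t y k • (a k - y) - fmAlpha a t y k • c := by
    intro k
    rw [fmAlpha_add_perp a t hy hc, sub_add_eq_sub_sub, smul_sub]
  rw [Finset.sum_congr rfl fun k _ => h k, Finset.sum_sub_distrib, ← Finset.sum_smul,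
    sum_fmAlpha hn, one_smul]

lemma fmVel_contDiffOn (hn : 0 < n) (a : Fin n → EuclideanSpace ℝ (Fin d)) :
    ContDiffOn ℝ 1 (fun p : ℝ × EuclideanSpace ℝ (Fin d) => fmVel a p.1 p.2)
      (Set.Iio (1:ℝ) ×ˢ Set.univ) := by
  set U : Set (ℝ × EuclideanSpace ℝ (Fin d)) := Set.Iio (1:ℝ) ×ˢ Set.univ with hU
  have hne1 : ∀ p ∈ U, (1:ℝ) - p.1 ≠ 0 := by
    rintro ⟨t, x⟩ hp
    have ht : t < 1 := hp.1
    exact ne_of_gt (sub_pos.mpr ht)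
  have hden : ∀ p ∈ U, (2 * (1 - p.1) ^ 2) ≠ 0 := by
    intro p hp
    have := hne1 p hp
    positivity
  have hexp : ∀ k : Fin n, ContDiffOn ℝ 1
      (fun p : ℝ × EuclideanSpace ℝ (Fin d) =>
        Real.exp (-‖p.2 - p.1 • a k‖ ^ 2 / (2 * (1 - p.1) ^ 2))) U := by
    intro k
    have c1 : ContDiff ℝ 1 (fun p : ℝ × EuclideanSpace ℝ (Fin d) => p.2 - p.1 • a k) :=
      contDiff_snd.sub (contDiff_fst.smul contDiff_const)
    have c2 : ContDiff ℝ 1 (fun p : ℝ × EuclideanSpace ℝ (Fin d) => -‖p.2 - p.1 • a k‖ ^ 2) :=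
      (c1.norm_sq ℝ).neg
    have c3 : ContDiff ℝ 1 (fun p : ℝ × EuclideanSpace ℝ (Fin d) => 2 * (1 - p.1) ^ 2) :=
      contDiff_const.mul ((contDiff_const.sub contDiff_fst).pow 2)
    exact Real.contDiff_exp.comp_contDiffOn ((c2.contDiffOn).div (c3.contDiffOn) hden)
  have hsum : ContDiffOn ℝ 1
      (fun p : ℝ × EuclideanSpace ℝ (Fin d) =>
        ∑ i, Real.exp (-‖p.2 - p.1 • a i‖ ^ 2 / (2 * (1 - p.1) ^ 2))) U := by
    exact ContDiffOn.sum fun i _ => hexp i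
  have hsumne : ∀ p ∈ U,
      (∑ i, Real.exp (-‖p.2 - p.1 • a i‖ ^ 2 / (2 * (1 - p.1) ^ 2))) ≠ 0 :=
    fun p _ => ne_of_gt (sum_exp_pos hn _)
  have halpha : ∀ k : Fin n, ContDiffOn ℝ 1
      (fun p : ℝ × EuclideanSpace ℝ (Fin d) => fmAlpha a p.1 p.2 k) U := by
    intro k
    exact (hexp k).div hsum hsumne
  have hscal : ContDiffOn ℝ 1 (fun p : ℝ × EuclideanSpace ℝ (Fin d) => 1 / (1 - p.1)) U :=
    contDiffOn_const.div ((contDiff_const.sub contDiff_fst).contDiffOn) hne1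
  have hsum2 : ContDiffOn ℝ 1
      (fun p : ℝ × EuclideanSpace ℝ (Fin d) =>
        ∑ k, fmAlpha a p.1 p.2 k • (a k - p.2)) U :=
    ContDiffOn.sum fun k _ =>
      (halpha k).smul ((contDiff_const.sub contDiff_snd).contDiffOn)
  exact hscal.smul hsum2

lemma fmVel_lipschitz (hn : 0 < n) (a : Fin n → EuclideanSpace ℝ (Fin d))
    (T R : ℝ) (hT : T < 1) :
    ∃ K : NNReal, ∀ s ∈ Set.Icc (0:ℝ) T,
      LipschitzOnWith K (fmVel a s) (Metric.closedBall 0 R) := by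
  set F : ℝ × EuclideanSpace ℝ (Fin d) → EuclideanSpace ℝ (Fin d) :=
    fun p => fmVel a p.1 p.2 with hFdef
  set U : Set (ℝ × EuclideanSpace ℝ (Fin d)) := Set.Iio (1:ℝ) ×ˢ Set.univ with hUdef
  have hUopen : IsOpen U := isOpen_Iio.prod isOpen_univ
  have hF := fmVel_contDiffOn hn a
  have hfd : ContinuousOn (fderiv ℝ F) U := hF.continuousOn_fderiv_of_isOpen hUopen le_rfl
  set Q : Set (ℝ × EuclideanSpace ℝ (Fin d)) := Set.Icc 0 T ×ˢ Metric.closedBall 0 R with hQdef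
  have hQU : Q ⊆ U := by
    rintro ⟨s, x⟩ ⟨hs, -⟩
    exact ⟨lt_of_le_of_lt hs.2 hT, trivial⟩
  have hQcomp : IsCompact Q := isCompact_Icc.prod (isCompact_closedBall _ _)
  obtain ⟨C, hC⟩ := hQcomp.exists_bound_of_continuousOn (hfd.mono hQU)
  refine ⟨⟨max C 0, le_max_right _ _⟩, fun s hs => ?_⟩
  have hdiffat : ∀ x : EuclideanSpace ℝ (Fin d),
      HasFDerivAt F (fderiv ℝ F (s, x)) (s, x) := by
    intro x
    have hmem : ((s, x) : ℝ × EuclideanSpace ℝ (Fin d)) ∈ U :=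
      ⟨lt_of_le_of_lt hs.2 hT, trivial⟩
    exact ((hF.differentiableOn one_ne_zero).differentiableAt (hUopen.mem_nhds hmem)).hasFDerivAt
  apply Convex.lipschitzOnWith_of_nnnorm_hasFDerivWithin_le
    (f' := fun x => (fderiv ℝ F (s, x)).comp
      (ContinuousLinearMap.inr ℝ ℝ (EuclideanSpace ℝ (Fin d))))
    ?_ ?_ (convex_closedBall _ _)
  · intro x _
    have hι : HasFDerivAt (fun y : EuclideanSpace ℝ (Fin d) => ((s : ℝ), y))
        (ContinuousLinearMap.inr ℝ ℝ (EuclideanSpace ℝ (Fin d))) x :=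
      (hasFDerivAt_const s x).prodMk (hasFDerivAt_id x)
    exact (((hdiffat x).comp x hι)).hasFDerivWithinAt
  · intro x hx
    have hxQ : ((s, x) : ℝ × EuclideanSpace ℝ (Fin d)) ∈ Q := ⟨hs, hx⟩
    have h1 : ‖fderiv ℝ F (s, x)‖ ≤ max C 0 := le_trans (hC _ hxQ) (le_max_left _ _)
    have hnorm : ‖(fderiv ℝ F (s, x)).comp
        (ContinuousLinearMap.inr ℝ ℝ (EuclideanSpace ℝ (Fin d)))‖ ≤ max C 0 := by
      refine ContinuousLinearMap.opNorm_le_bound _ (le_max_right C 0) fun y => ?_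
      have heq : ((fderiv ℝ F (s, x)).comp
          (ContinuousLinearMap.inr ℝ ℝ (EuclideanSpace ℝ (Fin d)))) y
          = fderiv ℝ F (s, x) (0, y) := rfl
      rw [heq]
      calc ‖fderiv ℝ F (s, x) (0, y)‖
          ≤ ‖fderiv ℝ F (s, x)‖ * ‖((0, y) : ℝ × EuclideanSpace ℝ (Fin d))‖ :=
            ContinuousLinearMap.le_opNorm _ _
        _ ≤ max C 0 * ‖y‖ := by
            have hny : ‖((0, y) : ℝ × EuclideanSpace ℝ (Fin d))‖ = ‖y‖ := by
              rw [Prod.norm_def]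
              simp
            rw [hny]
            exact mul_le_mul_of_nonneg_right h1 (norm_nonneg _)
    exact hnorm


lemma gamma_mem_span (hn : 0 < n) (a : Fin n → EuclideanSpace ℝ (Fin d))
    (γ : ℝ → EuclideanSpace ℝ (Fin d) → EuclideanSpace ℝ (Fin d))
    (hγ0 : ∀ y, γ 0 y = y)
    (hγ : ∀ y, ∀ t ∈ Set.Ico (0 : ℝ) 1,
      HasDerivAt (fun s => γ s y) (fmVel a t (γ t y)) t)
    {y : EuclideanSpace ℝ (Fin d)} (hy : y ∈ Submodule.span ℝ (Set.range a)) :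
    ∀ s ∈ Set.Ico (0:ℝ) 1, γ s y ∈ Submodule.span ℝ (Set.range a) := by
  set E : Submodule ℝ (EuclideanSpace ℝ (Fin d)) := Submodule.span ℝ (Set.range a) with hE
  set P : EuclideanSpace ℝ (Fin d) →L[ℝ] EuclideanSpace ℝ (Fin d) :=
    E.subtypeL.comp (E.orthogonalProjectionOnto) with hP
  have hPmem : ∀ z, P z ∈ E := fun z => SetLike.coe_mem _
  have hPid : ∀ z ∈ E, P z = z := fun z hz => Submodule.starProjection_eq_self_iff.mpr hz
  have hPperp : ∀ z ∈ Eᗮ, P z = (0 : EuclideanSpace ℝ (Fin d)) := by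
    intro z hz
    have : E.orthogonalProjectionOnto z = 0 :=
      Submodule.orthogonalProjectionOnto_apply_of_mem_orthogonal hz
    simp [hP, ContinuousLinearMap.comp_apply, this]
  have key : ∀ (s : ℝ) (u : EuclideanSpace ℝ (Fin d)),
      fmVel a s u - P (fmVel a s u) = (-(1-s)⁻¹) • (u - P u) := by
    intro s u
    have hu1 : P u ∈ E := hPmem u
    have hu2 : u - P u ∈ Eᗮ := Submodule.sub_starProjection_mem_orthogonal u
    have hdecomp : fmVel a s u = fmVel a s (P u + (u - P u)) := by
      rw [add_sub_cancel]
    rw [hdecomp, fmVel_add_perp hn a s hu1 hu2, map_sub, map_smul,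
      hPperp _ hu2, hPid _ (fmVel_mem a s hu1)]
    rw [smul_zero, sub_zero, sub_sub_cancel_left, one_div, neg_smul]
  set q : ℝ → EuclideanSpace ℝ (Fin d) := fun s => γ s y - P (γ s y) with hq
  have hq' : ∀ s ∈ Set.Ico (0:ℝ) 1, HasDerivAt q ((-(1-s)⁻¹) • q s) s := by
    intro s hs
    have h1 := hγ y s hs
    have h2 : HasDerivAt (fun τ => P (γ τ y)) (P (fmVel a s (γ s y))) s :=
      P.hasFDerivAt.comp_hasDerivAt s h1
    have h3 := h1.sub h2
    rw [key s (γ s y)] at h3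
    exact h3
  set r : ℝ → EuclideanSpace ℝ (Fin d) := fun s => (1-s)⁻¹ • q s with hr
  have hr' : ∀ s ∈ Set.Ico (0:ℝ) 1, HasDerivAt r 0 s := by
    intro s hs
    have hne : (1:ℝ) - s ≠ 0 := ne_of_gt (sub_pos.mpr hs.2)
    have hinv : HasDerivAt (fun τ : ℝ => ((1:ℝ) - τ)⁻¹) (-(0-1)/(1-s)^2) s :=
      ((hasDerivAt_const s (1:ℝ)).sub (hasDerivAt_id s)).inv hne
    have h : HasDerivAt r ((1-s)⁻¹ • (-(1-s)⁻¹) • q s + (-(0-1)/(1-s)^2) • q s) s :=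
      hinv.smul (hq' s hs)
    convert h using 1
    have hc : (1-s)⁻¹ * (-(1-s)⁻¹) + (-(0-1)/(1-s)^2) = 0 := by
      field_simp
      ring
    rw [smul_smul, ← add_smul, hc, zero_smul]
  intro s hs
  have hne : (1:ℝ) - s ≠ 0 := ne_of_gt (sub_pos.mpr hs.2)
  have hrconst : r s = r 0 := by
    have hmem : ∀ u ∈ Set.Icc (0:ℝ) s, u ∈ Set.Ico (0:ℝ) 1 :=
      fun u hu => ⟨hu.1, lt_of_le_of_lt hu.2 hs.2⟩
    have h := Convex.norm_image_sub_le_of_norm_hasDerivWithin_le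
      (C := (0:ℝ)) (f' := fun _ => (0 : EuclideanSpace ℝ (Fin d)))
      (fun u hu => (hr' u (hmem u hu)).hasDerivWithinAt)
      (fun u _ => by simp) (convex_Icc (0:ℝ) s)
      (Set.left_mem_Icc.mpr hs.1) (Set.right_mem_Icc.mpr hs.1)
    have h0 : ‖r s - r 0‖ ≤ 0 := by simpa using h
    have := le_antisymm h0 (norm_nonneg _)
    rwa [norm_eq_zero, sub_eq_zero] at this
  have hr0 : r 0 = 0 := by
    simp only [hr, hq]
    rw [hγ0 y, hPid y hy]
    simp
  have hqs : q s = 0 := by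
    have h1 : (1-s)⁻¹ • q s = 0 := by
      have h2 : r s = 0 := hrconst.trans hr0
      simpa [hr] using h2
    rcases smul_eq_zero.mp h1 with h | h
    · exact absurd h (inv_ne_zero hne)
    · exact h
  have : γ s y = P (γ s y) := by
    have := hqs
    rwa [hq, sub_eq_zero] at this
  rw [this]
  exact hPmem _

end FMaux

theorem stmt_4 {d n : ℕ} (hn : 0 < n) (a : Fin n → EuclideanSpace ℝ (Fin d))
    (h0 : a ⟨0, hn⟩ = 0)
    (γ : ℝ → EuclideanSpace ℝ (Fin d) → EuclideanSpace ℝ (Fin d))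
    (hγ0 : ∀ y, γ 0 y = y)
    (hγ : ∀ y, ∀ t ∈ Set.Ico (0 : ℝ) 1,
      HasDerivAt (fun s => γ s y) (fmVel a t (γ t y)) t)
    (x xpar xperp : EuclideanSpace ℝ (Fin d))
    (hxpar : xpar = (Submodule.orthogonalProjectionOnto (Submodule.span ℝ (Set.range a)) x :
      EuclideanSpace ℝ (Fin d)))
    (hxperp : xperp = x - xpar) :
    (∀ t ∈ Set.Ico (0 : ℝ) 1, γ t x = γ t xpar + (1 - t) • xperp) ∧
      Tendsto (fun t : ℝ => (1 - t) • xperp) (nhdsWithin 1 (Set.Iio 1))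
        (nhds 0) := by
  constructor
  · intro T hT
    have hxparE : xpar ∈ Submodule.span ℝ (Set.range a) := by
      rw [hxpar]; exact SetLike.coe_mem _
    have hxperpE : xperp ∈ (Submodule.span ℝ (Set.range a))ᗮ := by
      rw [hxperp, hxpar]; exact Submodule.sub_starProjection_mem_orthogonal x
    have hmemIco : ∀ s ∈ Set.Icc (0:ℝ) T, s ∈ Set.Ico (0:ℝ) 1 :=
      fun s hs => ⟨hs.1, lt_of_le_of_lt hs.2 hT.2⟩
    set f : ℝ → EuclideanSpace ℝ (Fin d) := fun s => γ s x with hf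
    set g : ℝ → EuclideanSpace ℝ (Fin d) := fun s => γ s xpar + (1 - s) • xperp with hg
    have hfc : ContinuousOn f (Set.Icc 0 T) :=
      continuousOn_of_forall_continuousAt fun s hs => (hγ x s (hmemIco s hs)).continuousAt
    have hgc : ContinuousOn g (Set.Icc 0 T) := by
      apply ContinuousOn.add
      · exact continuousOn_of_forall_continuousAt fun s hs =>
          (hγ xpar s (hmemIco s hs)).continuousAt
      · exact ((continuous_const.sub continuous_id).smul continuous_const).continuousOn
    obtain ⟨C1, hC1⟩ := isCompact_Icc.exists_bound_of_continuousOn hfc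
    obtain ⟨C2, hC2⟩ := isCompact_Icc.exists_bound_of_continuousOn hgc
    set R := max C1 C2 with hR
    obtain ⟨K, hK⟩ := FMaux.fmVel_lipschitz hn a T R hT.2
    set S : ℝ → Set (EuclideanSpace ℝ (Fin d)) :=
      fun s => if s ∈ Set.Icc (0:ℝ) T then Metric.closedBall 0 R else ∅ with hS
    have hv : ∀ s, LipschitzOnWith K (fmVel a s) (S s) := by
      intro s
      by_cases h : s ∈ Set.Icc (0:ℝ) T
      · rw [hS]; simp only [if_pos h]; exact hK s h
      · rw [hS]; simp only [if_neg h]; exact lipschitzOnWith_empty _ _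
    have hf' : ∀ s ∈ Set.Ico (0:ℝ) T, HasDerivWithinAt f (fmVel a s (f s)) (Set.Ici s) s :=
      fun s hs => (hγ x s (hmemIco s (Set.Ico_subset_Icc_self hs))).hasDerivWithinAt
    have hfs : ∀ s ∈ Set.Ico (0:ℝ) T, f s ∈ S s := by
      intro s hs
      have hs' := Set.Ico_subset_Icc_self hs
      simp only [hS, if_pos hs']
      exact mem_closedBall_zero_iff.mpr ((hC1 s hs').trans (le_max_left _ _))
    have hg' : ∀ s ∈ Set.Ico (0:ℝ) T, HasDerivWithinAt g (fmVel a s (g s)) (Set.Ici s) s := by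
      intro s hs
      have hs1 : s ∈ Set.Ico (0:ℝ) 1 := hmemIco s (Set.Ico_subset_Icc_self hs)
      have hne : (1:ℝ) - s ≠ 0 := ne_of_gt (sub_pos.mpr hs1.2)
      have h1 := hγ xpar s hs1
      have h2 : HasDerivAt (fun τ : ℝ => (1 - τ) • xperp) (((0:ℝ)-1) • xperp) s :=
        ((hasDerivAt_const s (1:ℝ)).sub (hasDerivAt_id s)).smul_const xperp
      have h3 := h1.add h2
      have hmemE := FMaux.gamma_mem_span hn a γ hγ0 hγ hxparE s hs1
      have hcperp : (1 - s) • xperp ∈ (Submodule.span ℝ (Set.range a))ᗮ :=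
        Submodule.smul_mem _ _ hxperpE
      have hvel : fmVel a s (g s) = fmVel a s (γ s xpar) - xperp := by
        have hgev : g s = γ s xpar + (1 - s) • xperp := rfl
        rw [hgev, FMaux.fmVel_add_perp hn a s hmemE hcperp, smul_smul]
        congr 1
        rw [one_div, inv_mul_cancel₀ hne, one_smul]
      rw [hvel]
      have heq2 : fmVel a s (γ s xpar) - xperp
          = fmVel a s (γ s xpar) + ((0:ℝ)-1) • xperp := by
        simp [sub_eq_add_neg]
      rw [heq2]
      exact h3.hasDerivWithinAt
    have hgs : ∀ s ∈ Set.Ico (0:ℝ) T, g s ∈ S s := by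
      intro s hs
      have hs' := Set.Ico_subset_Icc_self hs
      simp only [hS, if_pos hs']
      exact mem_closedBall_zero_iff.mpr ((hC2 s hs').trans (le_max_right _ _))
    have h00 : f 0 = g 0 := by
      simp [hf, hg, hγ0, hxperp]
    have huniq := ODE_solution_unique_of_mem_Icc_right (fun s _ => hv s) hfc hf' hfs hgc hg' hgs h00
    exact huniq (Set.right_mem_Icc.mpr hT.1)
  · have hcont : Tendsto (fun t : ℝ => (1 - t) • xperp) (nhds 1) (nhds 0) := by
      have hc : Continuous (fun t : ℝ => (1 - t) • xperp) :=
        (continuous_const.sub continuous_id).smul continuous_const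
      have h := hc.tendsto (1:ℝ)
      simpa using h
    exact hcont.mono_left nhdsWithin_le_nhds
end

section
/- For each k, the Flow Matching cell Gamma_k = {x in R^d : gamma_1(x) = a_k} equals the union over t in (t_r, 1) of the preimages gamma_t^{-1}(B_r(a_k)), where r < (1/2) min_{l != k} ||a_k - a_l|| and t_r in (0,1) is the late-time capture threshold. In particular, since each gamma_t (t < 1) is a homeomorphism of R^d and B_r(a_k) is open, Gamma_k is an open subset of R^d. -/
open Real Metric Set Filter
open scoped Topology

theorem stmt_7 {d n : ℕ} (a : Fin n → EuclideanSpace ℝ (Fin d)) (k : Fin n)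
    (r : ℝ) (hr : 0 < r) (hhalf : ∀ l : Fin n, l ≠ k → r < ‖a k - a l‖ / 2)
    (γ : ℝ → EuclideanSpace ℝ (Fin d) → EuclideanSpace ℝ (Fin d))
    (hcont : ∀ t ∈ Set.Ico (0 : ℝ) 1, Continuous (γ t))
    (hlim : ∀ x, Tendsto (fun t => γ t x) (nhdsWithin 1 (Set.Iio 1)) (nhds (γ 1 x)))
    (tr : ℝ) (htr : tr ∈ Set.Ioo (0 : ℝ) 1)
    (hcap : ∀ x, ∀ t ∈ Set.Ioo tr (1 : ℝ),
      γ t x ∈ Metric.closedBall (a k) r → γ 1 x = a k) :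
    ({x | γ 1 x = a k} = ⋃ t ∈ Set.Ioo tr (1 : ℝ), γ t ⁻¹' Metric.ball (a k) r) ∧
      IsOpen {x | γ 1 x = a k} := by
  have heq : {x | γ 1 x = a k} = ⋃ t ∈ Set.Ioo tr (1 : ℝ), γ t ⁻¹' Metric.ball (a k) r := by
    ext x
    simp only [Set.mem_setOf_eq, Set.mem_iUnion, Set.mem_preimage, Metric.mem_ball]
    constructor
    · intro hx
      have h1 : ∀ᶠ t in nhdsWithin 1 (Set.Iio 1), dist (γ t x) (a k) < r := by
        have := (hlim x).eventually (Metric.ball_mem_nhds (γ 1 x) hr)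
        filter_upwards [this] with t ht
        rw [hx] at ht
        exact ht
      have h2 : ∀ᶠ t in nhdsWithin 1 (Set.Iio 1), t ∈ Set.Ioo tr 1 := by
        have : Set.Ioo tr 1 ∈ nhdsWithin 1 (Set.Iio 1) :=
          mem_nhdsWithin.2 ⟨Set.Ioi tr, isOpen_Ioi, htr.2, fun y hy => ⟨hy.1, hy.2⟩⟩
        exact this
      have : (nhdsWithin (1 : ℝ) (Set.Iio 1)).NeBot := by infer_instance
      obtain ⟨t, ht1, ht2⟩ := (h2.and h1).exists
      exact ⟨t, ht1, ht2⟩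
    · rintro ⟨t, ht, hd⟩
      exact hcap x t ht (Metric.mem_closedBall.2 hd.le)
  refine ⟨heq, ?_⟩
  rw [heq]
  refine isOpen_biUnion fun t ht => ?_
  exact (hcont t ⟨le_of_lt (lt_trans htr.1 ht.1), ht.2⟩).isOpen_preimage _ Metric.isOpen_ball
end

section
/- Under the late-time capture hypothesis, each Flow Matching cell Gamma_k is path-connected: for any x_0, x_1 in Gamma_k there exists a continuous path in Gamma_k from x_0 to x_1, obtained by choosing t in (t_r, 1) large enough that gamma_t(x_0), gamma_t(x_1) lie in the closed ball B_r(a_k), taking the straight segment between gamma_t(x_0) and gamma_t(x_1) inside the ball, and pulling it back by gamma_t^{-1}. -/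
open Real Metric Set Filter
open scoped Topology

theorem stmt_8 {d n : ℕ} (a : Fin n → EuclideanSpace ℝ (Fin d)) (k : Fin n)
    (r : ℝ) (hr : 0 < r) (hhalf : ∀ l : Fin n, l ≠ k → r < ‖a k - a l‖ / 2)
    (γ : ℝ → EuclideanSpace ℝ (Fin d) → EuclideanSpace ℝ (Fin d))
    (hhomeo : ∀ t ∈ Set.Ico (0 : ℝ) 1, IsHomeomorph (γ t))
    (tr : ℝ) (htr : tr ∈ Set.Ioo (0 : ℝ) 1)
    (Γ : Set (EuclideanSpace ℝ (Fin d)))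
    (hΓ : Γ = {x | Tendsto (fun t => γ t x) (nhdsWithin 1 (Set.Iio 1)) (nhds (a k))})
    (hcap : ∀ x, ∀ t ∈ Set.Ioo tr (1 : ℝ),
      γ t x ∈ Metric.closedBall (a k) r → x ∈ Γ) :
    ∀ x₀ ∈ Γ, ∀ x₁ ∈ Γ, JoinedIn Γ x₀ x₁ := by
  intro x₀ hx₀ x₁ hx₁
  have h0 : Tendsto (fun t => γ t x₀) (nhdsWithin 1 (Set.Iio 1)) (nhds (a k)) := by
    rw [hΓ] at hx₀; exact hx₀
  have h1 : Tendsto (fun t => γ t x₁) (nhdsWithin 1 (Set.Iio 1)) (nhds (a k)) := by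
    rw [hΓ] at hx₁; exact hx₁
  have hball : Metric.closedBall (a k) r ∈ nhds (a k) :=
    Metric.closedBall_mem_nhds _ hr
  have hIoo : Set.Ioo tr 1 ∈ nhdsWithin (1 : ℝ) (Set.Iio 1) :=
    Ioo_mem_nhdsLT_of_mem ⟨htr.2, le_refl 1⟩
  have hev : ∀ᶠ t in nhdsWithin (1 : ℝ) (Set.Iio 1),
      t ∈ Set.Ioo tr 1 ∧ γ t x₀ ∈ Metric.closedBall (a k) r ∧
        γ t x₁ ∈ Metric.closedBall (a k) r :=
    (Filter.eventually_mem_set.2 hIoo).and ((h0.eventually_mem hball).and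
      (h1.eventually_mem hball))
  obtain ⟨t, ht, hb0, hb1⟩ := hev.exists
  have htI : t ∈ Set.Ico (0 : ℝ) 1 := ⟨le_of_lt (lt_trans htr.1 ht.1), ht.2⟩
  set h := (hhomeo t htI).homeomorph (γ t) with hh
  have hsymm : ∀ x, h.symm (γ t x) = x := fun x => h.symm_apply_apply x
  have hseg : ∀ s : unitInterval,
      (1 - (s : ℝ)) • γ t x₀ + (s : ℝ) • γ t x₁ ∈ Metric.closedBall (a k) r := by
    intro s
    exact (convex_closedBall (a k) r) hb0 hb1 (by simp [s.2.2]) s.2.1 (by ring)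
  refine ⟨⟨⟨fun s => h.symm ((1 - (s : ℝ)) • γ t x₀ + (s : ℝ) • γ t x₁), ?_⟩, ?_, ?_⟩, ?_⟩
  · exact h.symm.continuous.comp (by fun_prop)
  · simp [hsymm x₀]
  · simp [hsymm x₁]
  · intro s
    apply hcap _ t ht
    have : γ t (h.symm ((1 - (s : ℝ)) • γ t x₀ + (s : ℝ) • γ t x₁)) =
        (1 - (s : ℝ)) • γ t x₀ + (s : ℝ) • γ t x₁ := h.apply_symm_apply _
    show γ t (h.symm ((1 - (s : ℝ)) • γ t x₀ + (s : ℝ) • γ t x₁)) ∈ _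
    rw [this]; exact hseg s
end

section
/- For semi-discrete Flow Matching with distinct atoms, the gradient of the velocity field satisfies grad v_t(x) = -(1/(1-t)) I + (t/(1-t)^3) A_t(x), where A_t(x) = sum_l alpha_l(t,x) (a_l - m_t(x)) a_l^T and m_t(x) = sum_j alpha_j(t,x) a_j. Moreover ||A_t(x)|| <= 4 M^2 (1 - alpha_k(t,x)) for any fixed k, where M = max_l ||a_l||; hence ||grad v_t(x)|| <= 1/(1-t) + 4 M^2 (1 - alpha_k(t,x))/(1-t)^3 <= 1/(1-t) + 4M^2/(1-t)^3 for all x. -/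
open Real Metric Set Filter
open scoped Topology

set_option maxHeartbeats 1000000
set_option synthInstance.maxHeartbeats 1000000

section Aux

variable {d n : ℕ}

lemma fmAlpha_sum_one (a : Fin n → EuclideanSpace ℝ (Fin d)) (t : ℝ) (x : EuclideanSpace ℝ (Fin d))
    (hn : 0 < n) : ∑ l, fmAlpha a t x l = 1 := by
  have hpos : 0 < ∑ i, Real.exp (-‖x - t • a i‖ ^ 2 / (2 * (1 - t) ^ 2)) := by
    apply Finset.sum_pos (fun i _ => Real.exp_pos _)
    exact ⟨⟨0, hn⟩, Finset.mem_univ _⟩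
  unfold fmAlpha
  rw [← Finset.sum_div, div_self hpos.ne']

lemma fmAlpha_nonneg (a : Fin n → EuclideanSpace ℝ (Fin d)) (t : ℝ) (x : EuclideanSpace ℝ (Fin d))
    (l : Fin n) : 0 ≤ fmAlpha a t x l :=
  div_nonneg (Real.exp_pos _).le (Finset.sum_nonneg fun _ _ => (Real.exp_pos _).le)

lemma fmAlpha_le_one (a : Fin n → EuclideanSpace ℝ (Fin d)) (t : ℝ) (x : EuclideanSpace ℝ (Fin d))
    (l : Fin n) : fmAlpha a t x l ≤ 1 := by
  have hpos : 0 < ∑ i, Real.exp (-‖x - t • a i‖ ^ 2 / (2 * (1 - t) ^ 2)) := by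
    apply Finset.sum_pos (fun i _ => Real.exp_pos _)
    exact ⟨l, Finset.mem_univ _⟩
  unfold fmAlpha
  rw [div_le_one hpos]
  exact Finset.single_le_sum (f := fun i => Real.exp (-‖x - t • a i‖ ^ 2 / (2 * (1 - t) ^ 2)))
    (fun i _ => (Real.exp_pos _).le) (Finset.mem_univ l)

lemma scalar_id {n : ℕ} (l : Fin n) (G b : Fin n → ℝ) (X v t : ℝ)
    (hS : (∑ i, G i) ≠ 0) :
    G l * (∑ i, G i)⁻¹ * (t * v) * (b l - ∑ i, G i * (∑ j, G j)⁻¹ * b i)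
    = G l * -((∑ i, G i)⁻¹ * (∑ i, G i * (-v * (X - t * b i))) * (∑ i, G i)⁻¹)
      + (∑ i, G i)⁻¹ * (G l * (-v * (X - t * b l))) := by
  have e1 : ∑ i, G i * (-v * (X - t * b i))
      = ∑ i, ((-v * X) * G i + (v * t) * (G i * b i)) :=
    Finset.sum_congr rfl fun i _ => by ring
  have e2 : ∑ i, G i * (∑ j, G j)⁻¹ * b i = (∑ j, G j)⁻¹ * ∑ i, G i * b i := by
    rw [Finset.mul_sum]; exact Finset.sum_congr rfl fun i _ => by ring
  rw [e1, Finset.sum_add_distrib, ← Finset.mul_sum, ← Finset.mul_sum, e2]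
  field_simp
  ring

lemma fmAlpha_hasFDerivAt (a : Fin n → EuclideanSpace ℝ (Fin d)) (t : ℝ)
    (hn : 0 < n) (x : EuclideanSpace ℝ (Fin d)) (l : Fin n) :
    HasFDerivAt (fun y => fmAlpha a t y l)
      ((fmAlpha a t x l * (t / (1 - t) ^ 2)) •
        innerSL ℝ (a l - ∑ j, fmAlpha a t x j • a j)) x := by
  have hz : ∀ i : Fin n, HasFDerivAt (fun y => -‖y - t • a i‖ ^ 2 / (2 * (1 - t) ^ 2))
      ((-(1 / (1 - t) ^ 2)) • innerSL ℝ (x - t • a i)) x := by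
    intro i
    have h0 : HasFDerivAt (fun y : EuclideanSpace ℝ (Fin d) => y - t • a i)
        (ContinuousLinearMap.id ℝ (EuclideanSpace ℝ (Fin d))) x :=
      (hasFDerivAt_id x).sub_const _
    have h1 := h0.norm_sq
    have h2 := h1.const_mul (-(1 / (2 * (1 - t) ^ 2)))
    have hfun : (fun y : EuclideanSpace ℝ (Fin d) => -‖y - t • a i‖ ^ 2 / (2 * (1 - t) ^ 2))
        = fun y => (-(1 / (2 * (1 - t) ^ 2))) * ‖y - t • a i‖ ^ 2 := by
      funext y; ring
    rw [hfun]
    refine h2.congr_fderiv ?_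
    ext h
    simp [two_smul]
    ring
  have hg : ∀ i : Fin n, HasFDerivAt
      (fun y => Real.exp (-‖y - t • a i‖ ^ 2 / (2 * (1 - t) ^ 2)))
      (Real.exp (-‖x - t • a i‖ ^ 2 / (2 * (1 - t) ^ 2)) •
        ((-(1 / (1 - t) ^ 2)) • innerSL ℝ (x - t • a i))) x := fun i => (hz i).exp
  have hSpos : 0 < ∑ i, Real.exp (-‖x - t • a i‖ ^ 2 / (2 * (1 - t) ^ 2)) :=
    Finset.sum_pos (fun i _ => Real.exp_pos _) ⟨⟨0, hn⟩, Finset.mem_univ _⟩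
  have hS : HasFDerivAt (fun y => ∑ i, Real.exp (-‖y - t • a i‖ ^ 2 / (2 * (1 - t) ^ 2)))
      (∑ i, Real.exp (-‖x - t • a i‖ ^ 2 / (2 * (1 - t) ^ 2)) •
        ((-(1 / (1 - t) ^ 2)) • innerSL ℝ (x - t • a i))) x :=
    HasFDerivAt.fun_sum fun i _ => hg i
  have hinv := (hasFDerivAt_inv' (𝕜 := ℝ) hSpos.ne').comp x hS
  have hmul := (hg l).mul hinv
  simp only [fmAlpha, div_eq_mul_inv]
  refine hmul.congr_fderiv ?_
  ext h
  simp only [ContinuousLinearMap.smul_apply, ContinuousLinearMap.add_apply,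
    ContinuousLinearMap.comp_apply, ContinuousLinearMap.neg_apply,
    ContinuousLinearMap.sum_apply, ContinuousLinearMap.mulLeftRight_apply,
    innerSL_apply_apply, smul_eq_mul, inner_sub_left, real_inner_smul_left,
    Function.comp_apply, sum_inner, div_eq_mul_inv, one_div, one_mul]
  exact scalar_id l (fun i => rexp (-‖x - t • a i‖ ^ 2 * (2 * (1 - t) ^ 2)⁻¹))
    (fun i => inner ℝ (a i) h) (inner ℝ x h) (((1 - t) ^ 2)⁻¹) t
    (by positivity) |>.symm

lemma vec_id {n d : ℕ} (α : Fin n → ℝ) (hα : ∑ k, α k = 1)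
    (a : Fin n → EuclideanSpace ℝ (Fin d)) (x h : EuclideanSpace ℝ (Fin d)) :
    ∑ k, (α k * (inner ℝ (a k - ∑ j, α j • a j) h : ℝ)) • (a k - x)
      = ∑ k, (α k * (inner ℝ (a k) h : ℝ)) • (a k - ∑ j, α j • a j) := by
  set m : EuclideanSpace ℝ (Fin d) := ∑ j, α j • a j with hm
  have hmh : (inner ℝ m h : ℝ) = ∑ j, α j * inner ℝ (a j) h := by
    rw [hm, sum_inner]
    exact Finset.sum_congr rfl fun j _ => real_inner_smul_left _ _ _
  have hzero : ∑ k, α k * (inner ℝ (a k - m) h : ℝ) = 0 := by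
    have hc : ∀ k ∈ Finset.univ, α k * (inner ℝ (a k - m) h : ℝ)
        = α k * inner ℝ (a k) h - (inner ℝ m h : ℝ) * α k := fun k _ => by
      rw [inner_sub_left]; ring
    rw [Finset.sum_congr rfl hc, Finset.sum_sub_distrib, ← Finset.mul_sum, hα, mul_one, hmh,
      sub_self]
  have hL : ∀ k ∈ Finset.univ, (α k * (inner ℝ (a k - m) h : ℝ)) • (a k - x)
      = ((α k * inner ℝ (a k) h) • a k - (inner ℝ m h : ℝ) • (α k • a k))
        - (α k * (inner ℝ (a k - m) h : ℝ)) • x := fun k _ => by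
    rw [smul_sub, smul_smul]
    congr 2
    rw [inner_sub_left, ← sub_smul]
    congr 1
    ring
  have hR : ∀ k ∈ Finset.univ, (α k * (inner ℝ (a k) h : ℝ)) • (a k - m)
      = (α k * inner ℝ (a k) h) • a k - (α k * (inner ℝ (a k) h : ℝ)) • m := fun k _ => by
    rw [smul_sub]
  rw [Finset.sum_congr rfl hL, Finset.sum_congr rfl hR, Finset.sum_sub_distrib,
    Finset.sum_sub_distrib, Finset.sum_sub_distrib, ← Finset.sum_smul, hzero, zero_smul,
    sub_zero, ← Finset.smul_sum, ← Finset.sum_smul, ← hmh]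

lemma fmVel_deriv {d n : ℕ} (a : Fin n → EuclideanSpace ℝ (Fin d))
    (t : ℝ) (ht : t ∈ Set.Ico (0 : ℝ) 1) (x : EuclideanSpace ℝ (Fin d))
    (hn : 0 < n)
    (m : EuclideanSpace ℝ (Fin d)) (hm : m = ∑ j, fmAlpha a t x j • a j)
    (A D : EuclideanSpace ℝ (Fin d) →L[ℝ] EuclideanSpace ℝ (Fin d))
    (hA : A = ∑ l, fmAlpha a t x l • ((innerSL ℝ (a l)).smulRight (a l - m)))
    (hD : D = (-(1 / (1 - t))) • ContinuousLinearMap.id ℝ (EuclideanSpace ℝ (Fin d))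
      + (t / (1 - t) ^ 3) • A) :
    HasFDerivAt (fmVel a t) D x := by
  have hs : (0:ℝ) < 1 - t := by linarith [ht.2]
  have hα1 : ∑ l, fmAlpha a t x l = 1 := fmAlpha_sum_one a t x hn
  have hterm : ∀ kk : Fin n, HasFDerivAt (fun y => fmAlpha a t y kk • (a kk - y))
      (fmAlpha a t x kk • ((0 : EuclideanSpace ℝ (Fin d) →L[ℝ] EuclideanSpace ℝ (Fin d))
          - ContinuousLinearMap.id ℝ (EuclideanSpace ℝ (Fin d)))
        + ((fmAlpha a t x kk * (t / (1 - t) ^ 2)) • innerSL ℝ (a kk - m)).smulRight (a kk - x))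
      x := by
    intro kk
    have h1 := fmAlpha_hasFDerivAt a t hn x kk
    rw [← hm] at h1
    have h2 : HasFDerivAt (fun y : EuclideanSpace ℝ (Fin d) => a kk - y)
        ((0 : EuclideanSpace ℝ (Fin d) →L[ℝ] EuclideanSpace ℝ (Fin d))
          - ContinuousLinearMap.id ℝ (EuclideanSpace ℝ (Fin d))) x :=
      (hasFDerivAt_const _ _).sub (hasFDerivAt_id x)
    exact h1.smul h2
  have hsum := HasFDerivAt.fun_sum (u := Finset.univ) (fun kk _ => hterm kk)
  have hfull := hsum.const_smul (1 / (1 - t))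
  have hvel : HasFDerivAt (fmVel a t)
      ((1 / (1 - t)) • ∑ kk, (fmAlpha a t x kk •
          ((0 : EuclideanSpace ℝ (Fin d) →L[ℝ] EuclideanSpace ℝ (Fin d))
            - ContinuousLinearMap.id ℝ (EuclideanSpace ℝ (Fin d)))
        + ((fmAlpha a t x kk * (t / (1 - t) ^ 2)) • innerSL ℝ (a kk - m)).smulRight (a kk - x)))
      x := hfull
  convert hvel using 1
  rw [hD, hA]
  subst hm
  refine ContinuousLinearMap.ext fun h => ?_
  simp only [ContinuousLinearMap.add_apply, ContinuousLinearMap.smul_apply,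
    ContinuousLinearMap.sum_apply, ContinuousLinearMap.smulRight_apply,
    ContinuousLinearMap.id_apply, ContinuousLinearMap.zero_apply,
    ContinuousLinearMap.sub_apply, ContinuousLinearMap.neg_apply,
    innerSL_apply_apply, zero_sub, smul_eq_mul]
  rw [Finset.sum_add_distrib, smul_add]
  have e1 : ∑ kk : Fin n, fmAlpha a t x kk • -h = -h := by
    rw [← Finset.sum_smul, hα1, one_smul]
  have e2 : ∀ kk ∈ Finset.univ, (fmAlpha a t x kk * (t / (1 - t) ^ 2) *
        (inner ℝ (a kk - ∑ j, fmAlpha a t x j • a j) h : ℝ)) • (a kk - x)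
      = (t / (1 - t) ^ 2) • ((fmAlpha a t x kk *
          (inner ℝ (a kk - ∑ j, fmAlpha a t x j • a j) h : ℝ)) • (a kk - x)) := fun kk _ => by
    rw [smul_smul]
    congr 1
    ring
  have e3 : ∀ kk ∈ Finset.univ, fmAlpha a t x kk • ((inner ℝ (a kk) h : ℝ) •
        (a kk - ∑ j, fmAlpha a t x j • a j))
      = (fmAlpha a t x kk * (inner ℝ (a kk) h : ℝ)) • (a kk - ∑ j, fmAlpha a t x j • a j) :=
    fun kk _ => smul_smul _ _ _
  rw [Finset.sum_congr rfl e2, Finset.sum_congr rfl e3, e1, ← Finset.smul_sum,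
    vec_id _ hα1 a x h, smul_smul]
  congr 1
  · rw [smul_neg, neg_smul]
  · congr 1
    rw [div_mul_div_comm, one_mul]
    congr 1
    ring

lemma normA_bound (a : Fin n → EuclideanSpace ℝ (Fin d)) (t : ℝ) (x : EuclideanSpace ℝ (Fin d))
    (k : Fin n) (M : ℝ) (hM : ∀ l : Fin n, ‖a l‖ ≤ M)
    (m : EuclideanSpace ℝ (Fin d)) (hm : m = ∑ j, fmAlpha a t x j • a j)
    (A : EuclideanSpace ℝ (Fin d) →L[ℝ] EuclideanSpace ℝ (Fin d))
    (hA : A = ∑ l, fmAlpha a t x l • ((innerSL ℝ (a l)).smulRight (a l - m))) :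
    ‖A‖ ≤ 4 * M ^ 2 * (1 - fmAlpha a t x k) := by
  have hn : 0 < n := k.pos
  have hα1 := fmAlpha_sum_one a t x hn
  have hα0 : ∀ l, 0 ≤ fmAlpha a t x l := fmAlpha_nonneg a t x
  have hαle : ∀ l, fmAlpha a t x l ≤ 1 := fmAlpha_le_one a t x
  have hM0 : 0 ≤ M := le_trans (norm_nonneg (a k)) (hM k)
  have hmb : ∀ l, ‖a l - m‖ ≤ 2 * M * (1 - fmAlpha a t x l) := by
    intro l
    have hrep : a l - m = ∑ j, fmAlpha a t x j • (a l - a j) := by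
      have hsub : ∀ j ∈ Finset.univ, fmAlpha a t x j • (a l - a j)
          = fmAlpha a t x j • a l - fmAlpha a t x j • a j := fun j _ => smul_sub _ _ _
      rw [Finset.sum_congr rfl hsub, Finset.sum_sub_distrib, ← Finset.sum_smul, hα1, one_smul,
        hm]
    rw [hrep]
    calc ‖∑ j, fmAlpha a t x j • (a l - a j)‖
        ≤ ∑ j, ‖fmAlpha a t x j • (a l - a j)‖ := norm_sum_le _ _
      _ = ∑ j, fmAlpha a t x j * ‖a l - a j‖ := by
          refine Finset.sum_congr rfl fun j _ => ?_
          rw [norm_smul, Real.norm_eq_abs, abs_of_nonneg (hα0 j)]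
      _ ≤ 2 * M * (1 - fmAlpha a t x l) := by
          rw [← Finset.add_sum_erase _ _ (Finset.mem_univ l), sub_self, norm_zero, mul_zero,
            zero_add]
          have hb : ∀ j ∈ Finset.univ.erase l, fmAlpha a t x j * ‖a l - a j‖
              ≤ fmAlpha a t x j * (2 * M) := fun j _ => by
            apply mul_le_mul_of_nonneg_left _ (hα0 j)
            calc ‖a l - a j‖ ≤ ‖a l‖ + ‖a j‖ := norm_sub_le _ _
              _ ≤ M + M := add_le_add (hM l) (hM j)
              _ = 2 * M := by ring
          calc ∑ j ∈ Finset.univ.erase l, fmAlpha a t x j * ‖a l - a j‖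
              ≤ ∑ j ∈ Finset.univ.erase l, fmAlpha a t x j * (2 * M) :=
                Finset.sum_le_sum hb
            _ = (1 - fmAlpha a t x l) * (2 * M) := by
                rw [← Finset.sum_mul, Finset.sum_erase_eq_sub (Finset.mem_univ l), hα1]
            _ = 2 * M * (1 - fmAlpha a t x l) := by ring
  have hterm : ∀ l, ‖fmAlpha a t x l • ((innerSL ℝ (a l)).smulRight (a l - m))‖
      = fmAlpha a t x l * (‖a l‖ * ‖a l - m‖) := by
    intro l
    rw [norm_smul (fmAlpha a t x l) (((innerSL ℝ) (a l)).smulRight (a l - m)),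
      Real.norm_eq_abs, abs_of_nonneg (hα0 l),
      ContinuousLinearMap.norm_smulRight_apply, innerSL_apply_norm]
  calc ‖A‖ ≤ ∑ l, ‖fmAlpha a t x l • ((innerSL ℝ (a l)).smulRight (a l - m))‖ := by
        rw [hA]; exact norm_sum_le _ _
    _ = ∑ l, fmAlpha a t x l * (‖a l‖ * ‖a l - m‖) := Finset.sum_congr rfl fun l _ => hterm l
    _ ≤ ∑ l, fmAlpha a t x l * (M * (2 * M * (1 - fmAlpha a t x l))) := by
        refine Finset.sum_le_sum fun l _ => mul_le_mul_of_nonneg_left ?_ (hα0 l)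
        exact mul_le_mul (hM l) (hmb l) (norm_nonneg _) hM0
    _ = 2 * M ^ 2 * ∑ l, fmAlpha a t x l * (1 - fmAlpha a t x l) := by
        rw [Finset.mul_sum]; exact Finset.sum_congr rfl fun l _ => by ring
    _ ≤ 2 * M ^ 2 * (2 * (1 - fmAlpha a t x k)) := by
        apply mul_le_mul_of_nonneg_left _ (by positivity)
        rw [← Finset.add_sum_erase _ _ (Finset.mem_univ k)]
        have h1 : fmAlpha a t x k * (1 - fmAlpha a t x k) ≤ 1 - fmAlpha a t x k := by
          nlinarith [hα0 k, hαle k]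
        have h2 : ∑ l ∈ Finset.univ.erase k, fmAlpha a t x l * (1 - fmAlpha a t x l)
            ≤ ∑ l ∈ Finset.univ.erase k, fmAlpha a t x l :=
          Finset.sum_le_sum fun l _ => by nlinarith [hα0 l, hαle l]
        have h3 : ∑ l ∈ Finset.univ.erase k, fmAlpha a t x l = 1 - fmAlpha a t x k := by
          rw [Finset.sum_erase_eq_sub (Finset.mem_univ k), hα1]
        linarith
    _ = 4 * M ^ 2 * (1 - fmAlpha a t x k) := by ring

end Aux

theorem stmt_16 {d n : ℕ} (a : Fin n → EuclideanSpace ℝ (Fin d))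
    (hdist : ∀ k l : Fin n, k ≠ l → a k ≠ a l)
    (t : ℝ) (ht : t ∈ Set.Ico (0 : ℝ) 1) (x : EuclideanSpace ℝ (Fin d))
    (k : Fin n) (M : ℝ) (hM : ∀ l : Fin n, ‖a l‖ ≤ M)
    (m : EuclideanSpace ℝ (Fin d)) (hm : m = ∑ j, fmAlpha a t x j • a j)
    (A D : EuclideanSpace ℝ (Fin d) →L[ℝ] EuclideanSpace ℝ (Fin d))
    (hA : A = ∑ l, fmAlpha a t x l • ((innerSL ℝ (a l)).smulRight (a l - m)))
    (hD : D = (-(1 / (1 - t))) • ContinuousLinearMap.id ℝ (EuclideanSpace ℝ (Fin d))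
      + (t / (1 - t) ^ 3) • A) :
    HasFDerivAt (fmVel a t) D x ∧
      ‖A‖ ≤ 4 * M ^ 2 * (1 - fmAlpha a t x k) ∧
      ‖D‖ ≤ 1 / (1 - t) + 4 * M ^ 2 * (1 - fmAlpha a t x k) / (1 - t) ^ 3 ∧
      ‖D‖ ≤ 1 / (1 - t) + 4 * M ^ 2 / (1 - t) ^ 3 := by
  have hs : (0:ℝ) < 1 - t := by linarith [ht.2]
  have hderiv := fmVel_deriv a t ht x k.pos m hm A D hA hD
  have hAbound := normA_bound a t x k M hM m hm A hA
  have hα0 := fmAlpha_nonneg a t x k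
  have hαle := fmAlpha_le_one a t x k
  have hM0 : 0 ≤ M := le_trans (norm_nonneg (a k)) (hM k)
  have hAnn : (0:ℝ) ≤ ‖A‖ := norm_nonneg _
  have hD1 : ‖D‖ ≤ 1 / (1 - t) + 4 * M ^ 2 * (1 - fmAlpha a t x k) / (1 - t) ^ 3 := by
    rw [hD]
    have e1 : ‖(-(1 / (1 - t))) • ContinuousLinearMap.id ℝ (EuclideanSpace ℝ (Fin d))‖
        ≤ 1 / (1 - t) := by
      rw [norm_smul (-(1 / (1 - t))) (ContinuousLinearMap.id ℝ (EuclideanSpace ℝ (Fin d))),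
        Real.norm_eq_abs, abs_neg, abs_of_pos (by positivity)]
      calc 1 / (1 - t) * ‖ContinuousLinearMap.id ℝ (EuclideanSpace ℝ (Fin d))‖
          ≤ 1 / (1 - t) * 1 :=
            mul_le_mul_of_nonneg_left ContinuousLinearMap.norm_id_le (by positivity)
        _ = 1 / (1 - t) := mul_one _
    have e2 : ‖(t / (1 - t) ^ 3) • A‖ ≤ 4 * M ^ 2 * (1 - fmAlpha a t x k) / (1 - t) ^ 3 := by
      refine le_trans (ContinuousLinearMap.opNorm_smul_le _ _) ?_
      rw [Real.norm_eq_abs, abs_of_nonneg (div_nonneg ht.1 (by positivity))]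
      calc t / (1 - t) ^ 3 * ‖A‖
          ≤ 1 / (1 - t) ^ 3 * (4 * M ^ 2 * (1 - fmAlpha a t x k)) := by
            apply mul_le_mul _ hAbound hAnn (by positivity)
            apply div_le_div_of_nonneg_right ?_ (by positivity)
            · linarith [ht.2]
        _ = 4 * M ^ 2 * (1 - fmAlpha a t x k) / (1 - t) ^ 3 := by ring
    calc ‖(-(1 / (1 - t))) • ContinuousLinearMap.id ℝ (EuclideanSpace ℝ (Fin d))
          + (t / (1 - t) ^ 3) • A‖
        ≤ ‖(-(1 / (1 - t))) • ContinuousLinearMap.id ℝ (EuclideanSpace ℝ (Fin d))‖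
          + ‖(t / (1 - t) ^ 3) • A‖ := norm_add_le _ _
      _ ≤ 1 / (1 - t) + 4 * M ^ 2 * (1 - fmAlpha a t x k) / (1 - t) ^ 3 := add_le_add e1 e2
  have hD2 : ‖D‖ ≤ 1 / (1 - t) + 4 * M ^ 2 / (1 - t) ^ 3 := by
    refine le_trans hD1 ?_
    have h5 : 4 * M ^ 2 * (1 - fmAlpha a t x k) / (1 - t) ^ 3 ≤ 4 * M ^ 2 / (1 - t) ^ 3 := by
      rw [div_le_div_iff₀ (by positivity) (by positivity)]
      nlinarith [mul_nonneg (mul_nonneg (by positivity : (0:ℝ) ≤ 4 * M ^ 2) hα0) (pow_pos hs 3).le]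
    linarith
  exact ⟨hderiv, hAbound, hD1, hD2⟩
end

section
/- Let w: [0, S] x R^d -> R^d be continuous, locally Lipschitz in the space variable, and let eta_s solve d/ds eta_s(x) = -w_s(eta_s(x)), eta_0(x) = x. Suppose for fixed a in R^d and constants C, delta > 0, T in (0,1), t in (T, 1) one has the bound ||w_s(y)|| <= C exp(-delta/(2(1-t+s)^2))/(1-t+s) + ||y - a||/(1-t+s) for all s in [0, min(S, t-T)] and all y in the closed ball B_r(a). If ||x - a|| <= r(1-t)/2 for some r > 0, then for all s in [0, min(s_0, t-T)] with s_0 the first exit time from B_r(a), the Gronwall inequality yields ||eta_s(x) - a|| <= 2 C s / delta + r/2; in particular, if s < min(delta r/(4C), t - T), then eta_s(x) remains in the open ball B_r(a). -/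
open Real Metric Set Filter
open scoped Topology

theorem stmt_17 {d : ℕ}
    (w : ℝ → EuclideanSpace ℝ (Fin d) → EuclideanSpace ℝ (Fin d))
    (η : ℝ → EuclideanSpace ℝ (Fin d))
    (a x : EuclideanSpace ℝ (Fin d)) (C δ T t r S : ℝ)
    (hC : 0 < C) (hδ : 0 < δ) (hr : 0 < r) (hS : 0 ≤ S)
    (hT : T ∈ Set.Ioo (0 : ℝ) 1) (ht : t ∈ Set.Ioo T 1)
    (hη0 : η 0 = x)
    (hηd : ∀ s ∈ Set.Icc (0 : ℝ) S, HasDerivAt η (-(w s (η s))) s)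
    (hw : ∀ s ∈ Set.Icc (0 : ℝ) (min S (t - T)), ∀ y ∈ Metric.closedBall a r,
      ‖w s y‖ ≤ C * Real.exp (-δ / (2 * (1 - t + s) ^ 2)) / (1 - t + s)
        + ‖y - a‖ / (1 - t + s))
    (hx : ‖x - a‖ ≤ r * (1 - t) / 2) :
    ∀ s ∈ Set.Icc (0 : ℝ) S, s < min (δ * r / (4 * C)) (t - T) →
      ‖η s - a‖ ≤ 2 * C * s / δ + r / 2 ∧ η s ∈ Metric.ball a r := by
  obtain ⟨hT0, hT1⟩ := hT
  obtain ⟨htT, ht1⟩ := ht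
  intro s hs hslt
  obtain ⟨hs0, hsS⟩ := hs
  have hstT : s < t - T := lt_of_lt_of_le hslt (min_le_right _ _)
  have hsδ : s < δ * r / (4 * C) := lt_of_lt_of_le hslt (min_le_left _ _)
  have h1t : 0 < 1 - t := by linarith
  have h2Cs : 2 * C * s / δ < r / 2 := by
    rw [div_lt_iff₀ hδ]
    have := (lt_div_iff₀ (by positivity : (0:ℝ) < 4 * C)).mp hsδ
    nlinarith
  have key : ‖η s - a‖ ≤ 2 * C * s / δ + r / 2 := by
    rw [add_comm]
    refine le_of_forall_pos_le_add ?_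
    intro ε' hε'
    have hs1 : (0:ℝ) < s + 1 := by linarith
    set ε : ℝ := min (ε' / (s + 1)) ((r / 2 - 2 * C * s / δ) / (2 * (s + 1))) with hεdef
    have hε : 0 < ε :=
      lt_min (by positivity) (div_pos (by linarith) (by positivity))
    set k : ℝ := 2 * C / δ + ε with hkdef
    have hk : 0 < k := by positivity
    set B : ℝ → ℝ := fun u => (1 - t + u) * (r / 2 + k * u) with hBdef
    set B' : ℝ → ℝ := fun u => (r / 2 + k * u) + (1 - t + u) * k with hB'def
    have hBderiv : ∀ u : ℝ, HasDerivAt B (B' u) u := by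
      intro u
      have h1 : HasDerivAt (fun v : ℝ => 1 - t + v) 1 u := (hasDerivAt_id u).const_add (1 - t)
      have h2 : HasDerivAt (fun v : ℝ => r / 2 + k * v) k u := by
        simpa using ((hasDerivAt_id u).const_mul k).const_add (r / 2)
      have h3 : HasDerivAt (fun v : ℝ => (1 - t + v) * (r / 2 + k * v))
          (1 * (r / 2 + k * u) + (1 - t + u) * k) u := h1.mul h2
      rw [one_mul] at h3
      exact h3
    have hεs' : ∀ u : ℝ, 0 ≤ u → u ≤ s → ε * u ≤ r / 2 - 2 * C * s / δ := by
      intro u hu0 hus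
      have h1 : ε * u ≤ (r / 2 - 2 * C * s / δ) / (2 * (s + 1)) * (s + 1) :=
        mul_le_mul (min_le_right _ _) (by linarith) hu0
          (le_of_lt (div_pos (by linarith) (by positivity)))
      have h2 : (r / 2 - 2 * C * s / δ) / (2 * (s + 1)) * (s + 1)
          = (r / 2 - 2 * C * s / δ) / 2 := by field_simp
      have h3 : (r / 2 - 2 * C * s / δ) / 2 ≤ r / 2 - 2 * C * s / δ := by linarith
      linarith
    have hBle : ∀ u : ℝ, 0 ≤ u → u ≤ s → B u ≤ r / 2 + 2 * C * s / δ + ε * s := by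
      intro u hu0 hus
      have hv1 : 1 - t + u ≤ 1 := by linarith
      have hpos : 0 ≤ r / 2 + k * u := by positivity
      have h1 : B u ≤ r / 2 + k * u :=
        (mul_le_mul_of_nonneg_right hv1 hpos).trans_eq (one_mul _)
      have h2 : k * u ≤ k * s := mul_le_mul_of_nonneg_left hus hk.le
      have h3 : k * s = 2 * C * s / δ + ε * s := by rw [hkdef]; ring
      calc B u ≤ r / 2 + k * u := h1
      _ ≤ r / 2 + k * s := add_le_add_right h2 _
      _ = r / 2 + 2 * C * s / δ + ε * s := by rw [h3]; ring
    have hBler : ∀ u : ℝ, 0 ≤ u → u ≤ s → B u ≤ r := by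
      intro u hu0 hus
      have := hBle u hu0 hus
      have := hεs' s hs0 le_rfl
      linarith
    -- hypotheses for the fencing theorem
    have hf : ContinuousOn (fun u => η u - a) (Set.Icc 0 s) := by
      intro u hu
      exact ((hηd u ⟨hu.1, hu.2.trans hsS⟩).continuousAt.continuousWithinAt).sub
        continuousWithinAt_const
    have hf' : ∀ u ∈ Set.Ico (0:ℝ) s,
        HasDerivWithinAt (fun u => η u - a) (-(w u (η u))) (Set.Ici u) u :=
      fun u hu => ((hηd u ⟨hu.1, hu.2.le.trans hsS⟩).sub_const a).hasDerivWithinAt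
    have ha0 : ‖η 0 - a‖ ≤ B 0 := by
      rw [hη0]
      have : B 0 = (1 - t) * (r / 2) := by simp [hBdef]
      rw [this]
      calc ‖x - a‖ ≤ r * (1 - t) / 2 := hx
      _ = (1 - t) * (r / 2) := by ring
    have bound : ∀ u ∈ Set.Ico (0:ℝ) s, ‖η u - a‖ = B u → ‖-(w u (η u))‖ < B' u := by
      intro u hu heq
      have hv0 : 0 < 1 - t + u := by linarith [hu.1]
      have huS : u ∈ Set.Icc (0:ℝ) (min S (t - T)) :=
        ⟨hu.1, le_min (hu.2.le.trans hsS) (by linarith [hu.2])⟩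
      have hball : η u ∈ Metric.closedBall a r := by
        rw [Metric.mem_closedBall, dist_eq_norm, heq]
        exact hBler u hu.1 hu.2.le
      have hwb := hw u huS (η u) hball
      rw [norm_neg]
      refine lt_of_le_of_lt hwb ?_
      rw [heq]
      have hBdiv : B u / (1 - t + u) = r / 2 + k * u := by
        rw [hBdef]; field_simp
      have hexp : Real.exp (-δ / (2 * (1 - t + u) ^ 2)) ≤ 2 * (1 - t + u) ^ 2 / δ := by
        set z : ℝ := δ / (2 * (1 - t + u) ^ 2) with hz
        have hz0 : 0 < z := by positivity
        have hze : z ≤ Real.exp z := by linarith [Real.add_one_le_exp z]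
        have h1 : (Real.exp z)⁻¹ ≤ z⁻¹ := inv_anti₀ hz0 hze
        have h2 : -δ / (2 * (1 - t + u) ^ 2) = -z := by rw [hz]; ring
        rw [h2, Real.exp_neg]
        refine h1.trans_eq ?_
        rw [hz, inv_div]
      have h1 : C * Real.exp (-δ / (2 * (1 - t + u) ^ 2)) / (1 - t + u)
          ≤ 2 * C * (1 - t + u) / δ := by
        rw [div_le_div_iff₀ hv0 hδ]
        calc C * Real.exp (-δ / (2 * (1 - t + u) ^ 2)) * δ
            ≤ C * (2 * (1 - t + u) ^ 2 / δ) * δ := by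
              exact mul_le_mul_of_nonneg_right
                (mul_le_mul_of_nonneg_left hexp hC.le) hδ.le
        _ = 2 * C * (1 - t + u) * (1 - t + u) := by field_simp
      have h2 : 2 * C * (1 - t + u) / δ < (1 - t + u) * k := by
        have he : 2 * C * (1 - t + u) / δ = (1 - t + u) * (2 * C / δ) := by ring
        rw [he, hkdef, mul_add]
        nlinarith [mul_pos hv0 hε]
      have hB'u : B' u = (r / 2 + k * u) + (1 - t + u) * k := rfl
      rw [hBdiv, hB'u]
      linarith
    have main := image_norm_le_of_norm_deriv_right_lt_deriv_boundary
      hf hf' ha0 hBderiv bound ⟨hs0, le_refl s⟩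
    have h1 : B s ≤ r / 2 + 2 * C * s / δ + ε * s := hBle s hs0 le_rfl
    have hεs : ε * s ≤ ε' := by
      have h2 : ε * s ≤ ε' / (s + 1) * (s + 1) :=
        mul_le_mul (min_le_left _ _) (by linarith) hs0 (by positivity)
      have h3 : ε' / (s + 1) * (s + 1) = ε' := by field_simp
      linarith
    calc ‖η s - a‖ ≤ B s := main
    _ ≤ r / 2 + 2 * C * s / δ + ε' := by linarith
  refine ⟨key, ?_⟩
  rw [Metric.mem_ball, dist_eq_norm]
  linarith
end
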